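/- Let x_t ∈ ℝ^p and x* ∈ ℝ^p be fixed, let y_t = M(x_t), let i_t be an index drawn uniformly from {1,…,n} independent of the mask m, and let η > 0. If each ∇f_i is L_i-Lipschitz and L_max = max_i L_i, then E[‖y_t − x_t − η ∇f_{i_t}(y_t)‖²] ≤ (4(1 + η² L_max²)(1 − ξ)/ξ) · ( ‖x_t − x*‖² + ‖x*‖² ) + 2η² · E[‖∇f_{i_t}(x_t)‖²], where expectations are over both the mask and the random index. -/

import Mathlib

/-!
Write `y - x - η ∇f_i(y) = (y - x - η ∇f_i(x)) - η (∇f_i(y) - ∇f_i(x))`. The second term has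
norm at most `|η| L_max ‖y - x‖`, so `(a + b)² ≤ 2a² + 2b²` reduces everything to
`E‖y - x - η ∇f_i(x)‖²` and `E‖y - x‖²`. Since `E[M(x)] = x` and the mask is independent of the
index, the cross term in the first vanishes, leaving `E‖y - x‖² + η² E‖∇f_i(x)‖²`; and
`E‖M(x) - x‖² = (1 - ξ)/ξ ‖x‖²` coordinatewise. Finally `‖x‖² ≤ 2(‖x - x*‖² + ‖x*‖²)`.
-/

open MeasureTheory ProbabilityTheory
open scoped RealInnerProductSpace

section SeminormedAddCommGroup

variable {E : Type*} [SeminormedAddCommGroup E]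

theorem norm_add_sq_le (a b : E) : ‖a + b‖ ^ 2 ≤ 2 * (‖a‖ ^ 2 + ‖b‖ ^ 2) :=
  (pow_le_pow_left₀ (norm_nonneg _) (norm_add_le a b) 2).trans (add_sq_le ..)

theorem norm_sub_sq_le (a b : E) : ‖a - b‖ ^ 2 ≤ 2 * (‖a‖ ^ 2 + ‖b‖ ^ 2) :=
  (pow_le_pow_left₀ (norm_nonneg _) (norm_sub_le a b) 2).trans (add_sq_le ..)

theorem norm_sub_smul_sq_le_of_norm_sub_le [NormedSpace ℝ E] {x y z : E} {K : ℝ}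
    (h : ‖z - y‖ ≤ K * ‖x‖) (η : ℝ) :
    ‖x - η • z‖ ^ 2 ≤ 2 * ‖x - η • y‖ ^ 2 + 2 * (η ^ 2 * K ^ 2) * ‖x‖ ^ 2 := by
  have hsplit : x - η • z = (x - η • y) - η • (z - y) := by
    rw [smul_sub]; abel
  have hdiff_sq : ‖η • (z - y)‖ ^ 2 ≤ η ^ 2 * K ^ 2 * ‖x‖ ^ 2 :=
    calc ‖η • (z - y)‖ ^ 2 ≤ (|η| * (K * ‖x‖)) ^ 2 := by
          rw [norm_smul, Real.norm_eq_abs]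
          exact pow_le_pow_left₀ (by positivity) (mul_le_mul_of_nonneg_left h (abs_nonneg η)) 2
      _ = η ^ 2 * K ^ 2 * ‖x‖ ^ 2 := by rw [mul_pow, mul_pow, sq_abs, mul_assoc]
  rw [hsplit]
  linarith [norm_sub_sq_le (x - η • y) (η • (z - y))]

end SeminormedAddCommGroup

section Independence

variable {Ω : Type*} [MeasurableSpace Ω] {P : Measure Ω}
  {E : Type*} [NormedAddCommGroup E] [InnerProductSpace ℝ E] [CompleteSpace E]
  [MeasurableSpace E] [BorelSpace E] {X Y : Ω → E}

theorem ProbabilityTheory.IndepFun.integral_inner (hXY : IndepFun X Y P) (hX : Integrable X P)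
    (hY : Integrable Y P) :
    ∫ ω, ⟪X ω, Y ω⟫ ∂P = ⟪∫ ω, X ω ∂P, ∫ ω, Y ω ∂P⟫ :=
  hXY.integral_bilin hX hY (innerSL ℝ)

variable [IsFiniteMeasure P]

theorem integral_norm_sub_smul_sq_of_indepFun (hXY : IndepFun X Y P) (hX : MemLp X 2 P)
    (hY : MemLp Y 2 P) (hX0 : ∫ ω, X ω ∂P = 0) (c : ℝ) :
    ∫ ω, ‖X ω - c • Y ω‖ ^ 2 ∂P = ∫ ω, ‖X ω‖ ^ 2 ∂P + c ^ 2 * ∫ ω, ‖Y ω‖ ^ 2 ∂P := by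
  have hcY : IndepFun X (fun ω => c • Y ω) P := hXY.comp measurable_id (measurable_const_smul c)
  have hXint := hX.integrable one_le_two
  have hcYint : Integrable (fun ω => c • Y ω) P := (hY.integrable one_le_two).smul c
  have hcross_int : Integrable (fun ω => ⟪X ω, c • Y ω⟫) P :=
    hcY.integrable_bilin hXint hcYint (innerSL ℝ)
  have hcross : ∫ ω, ⟪X ω, c • Y ω⟫ ∂P = 0 := by
    rw [hcY.integral_inner hXint hcYint, hX0, inner_zero_left]
  have hexpand (ω : Ω) :
      ‖X ω - c • Y ω‖ ^ 2 = ‖X ω‖ ^ 2 + c ^ 2 * ‖Y ω‖ ^ 2 - 2 * ⟪X ω, c • Y ω⟫ := by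
    rw [norm_sub_sq_real, norm_smul, mul_pow, Real.norm_eq_abs, sq_abs]
    ring
  have hsum_int : Integrable (fun ω => ‖X ω‖ ^ 2 + c ^ 2 * ‖Y ω‖ ^ 2) P :=
    hX.integrable_norm_pow'.add (hY.integrable_norm_pow'.const_mul _)
  simp_rw [hexpand]
  rw [integral_sub hsum_int (hcross_int.const_mul 2),
    integral_add hX.integrable_norm_pow' (hY.integrable_norm_pow'.const_mul _),
    integral_const_mul, integral_const_mul, hcross, mul_zero, sub_zero]

theorem integral_norm_sub_smul_sq_le_of_indepFun (hXY : IndepFun X Y P) (hX : MemLp X 2 P)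
    (hY : MemLp Y 2 P) (hX0 : ∫ ω, X ω ∂P = 0) {Z : Ω → E} {K : ℝ}
    (hZ : ∀ ω, ‖Z ω - Y ω‖ ≤ K * ‖X ω‖) (η : ℝ) :
    ∫ ω, ‖X ω - η • Z ω‖ ^ 2 ∂P
      ≤ 2 * (1 + η ^ 2 * K ^ 2) * ∫ ω, ‖X ω‖ ^ 2 ∂P + 2 * η ^ 2 * ∫ ω, ‖Y ω‖ ^ 2 ∂P := by
  have hint₁ : Integrable (fun ω => 2 * ‖X ω - η • Y ω‖ ^ 2) P :=
    (hX.sub (hY.const_smul η)).integrable_norm_pow'.const_mul 2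
  have hint₂ : Integrable (fun ω => 2 * (η ^ 2 * K ^ 2) * ‖X ω‖ ^ 2) P :=
    hX.integrable_norm_pow'.const_mul _
  calc ∫ ω, ‖X ω - η • Z ω‖ ^ 2 ∂P
      ≤ ∫ ω, (2 * ‖X ω - η • Y ω‖ ^ 2 + 2 * (η ^ 2 * K ^ 2) * ‖X ω‖ ^ 2) ∂P :=
        integral_mono_of_nonneg (ae_of_all _ fun ω => by positivity) (hint₁.add hint₂)
          (ae_of_all _ fun ω => norm_sub_smul_sq_le_of_norm_sub_le (hZ ω) η)
    _ = 2 * (1 + η ^ 2 * K ^ 2) * ∫ ω, ‖X ω‖ ^ 2 ∂P + 2 * η ^ 2 * ∫ ω, ‖Y ω‖ ^ 2 ∂P := by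
        rw [integral_add hint₁ hint₂, integral_const_mul, integral_const_mul,
          integral_norm_sub_smul_sq_of_indepFun hXY hX hY hX0 η]
        ring

end Independence

section Compression

variable {Ω : Type*} [MeasurableSpace Ω] {P : Measure Ω} {ι : Type*}

/-- The paper's compression operator `M(x)`, for the mask realisation `v`. -/
noncomputable def compress (ξ : ℝ) (v : ι → ℝ) (x : EuclideanSpace ℝ ι) : EuclideanSpace ℝ ι :=
  WithLp.toLp 2 fun j => if v j = 1 then x j / ξ else 0

@[simp]
theorem compress_apply (ξ : ℝ) (v : ι → ℝ) (x : EuclideanSpace ℝ ι) (j : ι) :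
    compress ξ v x j = if v j = 1 then x j / ξ else 0 := rfl

theorem measurable_compress (ξ : ℝ) (x : EuclideanSpace ℝ ι) :
    Measurable fun v : ι → ℝ => compress ξ v x :=
  (WithLp.measurable_toLp 2 _).comp <| measurable_pi_lambda _ fun j =>
    Measurable.ite (measurable_pi_apply j (measurableSet_singleton 1)) measurable_const
      measurable_const

theorem integral_ite_const [IsProbabilityMeasure P] {q : Ω → Prop} [DecidablePred q]
    (hq : MeasurableSet {ω | q ω}) (a b : ℝ) :
    ∫ ω, (if q ω then a else b) ∂P = P.real {ω | q ω} * a + (1 - P.real {ω | q ω}) * b := by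
  change ∫ ω, {ω | q ω}.piecewise (fun _ => a) (fun _ => b) ω ∂P = _
  rw [integral_piecewise hq (integrable_const a).integrableOn (integrable_const b).integrableOn,
    setIntegral_const, setIntegral_const, probReal_compl_eq_one_sub hq, smul_eq_mul, smul_eq_mul]

variable {m : Ω → ι → ℝ} {ξ : ℝ}

theorem measurableSet_mask_eq_one (hm : Measurable m) (j : ι) :
    MeasurableSet {ω | m ω j = 1} :=
  (measurable_pi_apply j).comp hm (measurableSet_singleton 1)

theorem memLp_compress [Fintype ι] [IsFiniteMeasure P] (hm : Measurable m)
    (x : EuclideanSpace ℝ ι) (p : ENNReal) : MemLp (fun ω => compress ξ (m ω) x) p P := by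
  refine memLp_piLp_iff.2 fun j => MemLp.of_bound ?_ |x j / ξ| (ae_of_all _ fun ω => ?_)
  · exact (Measurable.ite (measurableSet_mask_eq_one hm j) measurable_const
      measurable_const).aestronglyMeasurable
  · simp only [compress_apply]
    split_ifs <;> simp only [Real.norm_eq_abs, abs_zero, le_refl, abs_nonneg]

variable [Fintype ι] [IsProbabilityMeasure P]

theorem integral_compress (hm : Measurable m) (hmξ : ∀ j, P.real {ω | m ω j = 1} = ξ)
    (hξ : ξ ≠ 0) (x : EuclideanSpace ℝ ι) : ∫ ω, compress ξ (m ω) x ∂P = x := by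
  ext j
  rw [eval_integral_piLp ((memLp_compress hm x 1).integrable le_rfl).eval_piLp j]
  simp only [compress_apply]
  rw [integral_ite_const (measurableSet_mask_eq_one hm j), hmξ]
  field_simp
  ring

theorem integral_compress_sub_self (hm : Measurable m) (hmξ : ∀ j, P.real {ω | m ω j = 1} = ξ)
    (hξ : ξ ≠ 0) (x : EuclideanSpace ℝ ι) : ∫ ω, compress ξ (m ω) x - x ∂P = 0 := by
  rw [integral_sub ((memLp_compress hm x 1).integrable le_rfl) (integrable_const x),
    integral_compress hm hmξ hξ x, integral_const, probReal_univ, one_smul, sub_self]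

theorem integral_norm_compress_sub_sq (hm : Measurable m)
    (hmξ : ∀ j, P.real {ω | m ω j = 1} = ξ) (hξ : ξ ≠ 0) (x : EuclideanSpace ℝ ι) :
    ∫ ω, ‖compress ξ (m ω) x - x‖ ^ 2 ∂P = (1 - ξ) / ξ * ‖x‖ ^ 2 := by
  have hcoord_int (j : ι) : Integrable (fun ω => (compress ξ (m ω) x j - x j) ^ 2) P :=
    (((memLp_compress hm x 2).sub (memLp_const x)).eval_piLp j).integrable_sq
  simp_rw [EuclideanSpace.real_norm_sq_eq, PiLp.sub_apply]
  rw [integral_finsetSum _ fun j _ => hcoord_int j, Finset.mul_sum]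
  refine Finset.sum_congr rfl fun j _ => ?_
  simp only [compress_apply, apply_ite (fun t => (t - x j) ^ 2)]
  rw [integral_ite_const (measurableSet_mask_eq_one hm j), hmξ]
  field_simp
  ring

end Compression

theorem ist_update_direction_bound_general
    {Ω : Type} [MeasurableSpace Ω] (P : Measure Ω) [IsProbabilityMeasure P]
    (p : ℕ) (ξ : ℝ) (hξ0 : 0 < ξ) (hξ1 : ξ ≤ 1)
    (m : Ω → Fin p → ℝ)
    (hm_meas : Measurable m)
    (hm_prob : ∀ i, P {ω | m ω i = 1} = ENNReal.ofReal ξ)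
    (n : ℕ)
    (fi : Fin n → EuclideanSpace ℝ (Fin p) → ℝ)
    (L : Fin n → ℝ)
    (hLip : ∀ i u v, ‖gradient (fi i) u - gradient (fi i) v‖ ≤ L i * ‖u - v‖)
    (Lmax : ℝ) (hLmax : IsGreatest (Set.range L) Lmax)
    (it : Ω → Fin n)
    (hit_meas : Measurable it)
    (hit_indep : IndepFun m it P)
    (η : ℝ)
    (xt xstar : EuclideanSpace ℝ (Fin p))
    (yt : Ω → EuclideanSpace ℝ (Fin p))
    (hyt : ∀ ω i, yt ω i = if m ω i = 1 then xt i / ξ else 0) :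
    ∫ ω, ‖yt ω - xt - η • gradient (fi (it ω)) (yt ω)‖ ^ 2 ∂P
      ≤ (4 * (1 + η ^ 2 * Lmax ^ 2) * (1 - ξ) / ξ) * (‖xt - xstar‖ ^ 2 + ‖xstar‖ ^ 2)
        + 2 * η ^ 2 * ∫ ω, ‖gradient (fi (it ω)) xt‖ ^ 2 ∂P := by
  obtain rfl : yt = fun ω => compress ξ (m ω) xt := funext fun ω => by ext j; exact hyt ω j
  have hmξ (j : Fin p) : P.real {ω | m ω j = 1} = ξ := by
    rw [measureReal_def, hm_prob, ENNReal.toReal_ofReal hξ0.le]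
  have hbound := integral_norm_sub_smul_sq_le_of_indepFun
    (X := fun ω => compress ξ (m ω) xt - xt) (Y := fun ω => gradient (fi (it ω)) xt)
    (hit_indep.comp ((measurable_compress ξ xt).sub_const xt)
      (measurable_of_countable fun k => gradient (fi k) xt))
    ((memLp_compress hm_meas xt 2).sub (memLp_const xt))
    ((MemLp.of_discrete (f := fun k => gradient (fi k) xt)).comp_of_map hit_meas.aemeasurable)
    (integral_compress_sub_self hm_meas hmξ hξ0.ne' xt)
    (fun ω => (hLip (it ω) _ _).trans
      (mul_le_mul_of_nonneg_right (hLmax.2 ⟨it ω, rfl⟩) (norm_nonneg _))) η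
  rw [integral_norm_compress_sub_sq hm_meas hmξ hξ0.ne' xt] at hbound
  have hxt : ‖xt‖ ^ 2 ≤ 2 * (‖xt - xstar‖ ^ 2 + ‖xstar‖ ^ 2) := by
    simpa using norm_add_sq_le (xt - xstar) xstar
  have hcoef : 0 ≤ 2 * (1 + η ^ 2 * Lmax ^ 2) * ((1 - ξ) / ξ) :=
    mul_nonneg (by positivity) (div_nonneg (by linarith) hξ0.le)
  have := mul_le_mul_of_nonneg_left hxt hcoef
  rw [mul_div_assoc]
  linarith

/-- **Lemma 3.**
With `y_t = M(x_t)` the compressed iterate, `i_t` uniform on `{1,…,n}`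
independent of the mask, `η > 0`, and each `∇f_i` being `L_i`-Lipschitz with
`L_max = max_i L_i`:
`E[‖y_t − x_t − η∇f_{i_t}(y_t)‖²]
  ≤ (4(1 + η²L_max²)(1−ξ)/ξ)(‖x_t − x*‖² + ‖x*‖²) + 2η² E[‖∇f_{i_t}(x_t)‖²]`. -/
theorem ist_update_direction_bound
    {Ω : Type} [MeasurableSpace Ω] (P : Measure Ω) [IsProbabilityMeasure P]
    (p : ℕ) (hp : 1 ≤ p) (ξ : ℝ) (hξ0 : 0 < ξ) (hξ1 : ξ ≤ 1)
    (m : Ω → Fin p → ℝ)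
    (hm_meas : Measurable m)
    (hm01 : ∀ ω i, m ω i = 0 ∨ m ω i = 1)
    (hm_indep : iIndepFun (fun i ω => m ω i) P)
    (hm_prob : ∀ i, P {ω | m ω i = 1} = ENNReal.ofReal ξ)
    (n : ℕ) (hn : 0 < n)
    (fi : Fin n → EuclideanSpace ℝ (Fin p) → ℝ)
    (hdiff : ∀ i, Differentiable ℝ (fi i))
    (L : Fin n → ℝ)
    (hLip : ∀ i u v, ‖gradient (fi i) u - gradient (fi i) v‖ ≤ L i * ‖u - v‖)
    (Lmax : ℝ) (hLmax : IsGreatest (Set.range L) Lmax)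
    (it : Ω → Fin n)
    (hit_meas : Measurable it)
    (hit_unif : ∀ k, P {ω | it ω = k} = (n : ENNReal)⁻¹)
    (hit_indep : IndepFun m it P)
    (η : ℝ) (hη : 0 < η)
    (xt xstar : EuclideanSpace ℝ (Fin p))
    (yt : Ω → EuclideanSpace ℝ (Fin p))
    (hyt : ∀ ω i, yt ω i = if m ω i = 1 then xt i / ξ else 0) :
    ∫ ω, ‖yt ω - xt - η • gradient (fi (it ω)) (yt ω)‖ ^ 2 ∂P
      ≤ (4 * (1 + η ^ 2 * Lmax ^ 2) * (1 - ξ) / ξ) * (‖xt - xstar‖ ^ 2 + ‖xstar‖ ^ 2)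
        + 2 * η ^ 2 * ∫ ω, ‖gradient (fi (it ω)) xt‖ ^ 2 ∂P :=
  ist_update_direction_bound_general P p ξ hξ0 hξ1 m hm_meas hm_prob n fi L hLip Lmax hLmax it
    hit_meas hit_indep η xt xstar yt hyt
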